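/- Let (g,T) be a division IARA with root system R and σ an automorphism satisfying (A1)–(A4). If α ∈ R with π(α) ≠ 0, x ∈ g_α, j ∈ ℤ, and π_j(x) ≠ 0, then there exists y ∈ g_{-α} such that 0 ≠ [π_j(x), π_{-j}(y)] ∈ T^0. -/

import Mathlib

open Finset

section IARADefs

variable (F L : Type*) [Field F] [LieRing L] [LieAlgebra F L]

/-- The root space of a toral subalgebra `T` attached to a linear functional `α`
(viewed as a functional on `L`; only its values on `T` matter). -/
def gSpace (T : LieSubalgebra F L) (α : L →ₗ[F] F) : Submodule F L where
  carrier := {x | ∀ t ∈ T, ⁅t, x⁆ = α t • x}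
  add_mem' := by
    intro a b ha hb t ht
    rw [lie_add, ha t ht, hb t ht, smul_add]
  zero_mem' := by intro t ht; simp
  smul_mem' := by
    intro c x hx t ht
    rw [lie_smul, hx t ht, smul_comm]

/-- `(g, T)` is a toral pair with root system (a set of representatives) `R`. -/
structure IsToralPair (T : LieSubalgebra F L) (R : Set (L →ₗ[F] F)) : Prop where
  root_ne : ∀ α ∈ R, gSpace F L T α ≠ ⊥
  decomp : (⨆ α ∈ R, gSpace F L T α) = ⊤
  complete : ∀ β : L →ₗ[F] F, gSpace F L T β ≠ ⊥ → ∃ α ∈ R, ∀ t ∈ T, α t = β t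

/-- (IA1): `B` is an invariant nondegenerate symmetric bilinear form on `g`
whose restriction to `T` is nondegenerate. -/
structure IsInvForm (B : LinearMap.BilinForm F L) (T : LieSubalgebra F L) : Prop where
  symm : ∀ x y : L, B x y = B y x
  inv : ∀ x y z : L, B ⁅x, y⁆ z = B x ⁅y, z⁆
  nondeg : ∀ x : L, (∀ y : L, B x y = 0) → x = 0
  nondegT : ∀ t ∈ T, (∀ s ∈ T, B t s = 0) → t = 0

/-- (IA2). -/
def IA2 (T : LieSubalgebra F L) (R : Set (L →ₗ[F] F)) : Prop :=
  ∀ α ∈ R, (∃ t ∈ T, α t ≠ 0) →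
    ∃ e ∈ gSpace F L T α, ∃ f ∈ gSpace F L T (-α), ⁅e, f⁆ ≠ 0 ∧ ⁅e, f⁆ ∈ T

/-- (IA2)′ (division condition). -/
def IA2' (T : LieSubalgebra F L) (R : Set (L →ₗ[F] F)) : Prop :=
  ∀ α ∈ R, (∃ t ∈ T, α t ≠ 0) → ∀ e ∈ gSpace F L T α, e ≠ 0 →
    ∃ f ∈ gSpace F L T (-α), ⁅e, f⁆ ≠ 0 ∧ ⁅e, f⁆ ∈ T

/-- (IA3): for nonisotropic roots `α` (i.e. `(α,α) = B t_α t_α ≠ 0` for a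
representative `t_α ∈ T` of `α`), `ad x` is locally nilpotent for `x ∈ g_α`. -/
def IA3 (B : LinearMap.BilinForm F L) (T : LieSubalgebra F L)
    (R : Set (L →ₗ[F] F)) : Prop :=
  ∀ α ∈ R, ∀ tα ∈ T, (∀ t ∈ T, α t = B tα t) → B tα tα ≠ 0 →
    ∀ x ∈ gSpace F L T α, ∀ y : L, ∃ n : ℕ, ((LieAlgebra.ad F L x) ^ n) y = 0

/-- An invariant affine reflection algebra. -/
structure IsIARA (B : LinearMap.BilinForm F L) (T : LieSubalgebra F L)
    (R : Set (L →ₗ[F] F)) : Prop where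
  nonzero : ∃ x : L, x ≠ 0
  toral : IsToralPair F L T R
  ia1 : IsInvForm F L B T
  ia2 : IA2 F L T R
  ia3 : IA3 F L B T R

/-- A division invariant affine reflection algebra. -/
structure IsDivIARA (B : LinearMap.BilinForm F L) (T : LieSubalgebra F L)
    (R : Set (L →ₗ[F] F)) : Prop where
  nonzero : ∃ x : L, x ≠ 0
  toral : IsToralPair F L T R
  ia1 : IsInvForm F L B T
  ia2' : IA2' F L T R
  ia3 : IA3 F L B T R

variable {F L}

/-- (A4): the centralizer of `T⁰` in `g⁰` is contained in `g₀`. -/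
def A4Cond (T : LieSubalgebra F L) (σ : L ≃ₗ[F] L) : Prop :=
  ∀ x : L, σ x = x → (∀ t ∈ T, σ t = t → ⁅t, x⁆ = 0) → ∀ t ∈ T, ⁅t, x⁆ = 0

/-- The projection `π = (1/m) ∑ σ^i` of `g` onto the fixed points of `σ`. -/
noncomputable def piL (σ : L ≃ₗ[F] L) (m : ℕ) : L →ₗ[F] L :=
  (m : F)⁻¹ • ∑ i ∈ Finset.range m, ((σ ^ i : L ≃ₗ[F] L) : L →ₗ[F] L)

/-- The induced projection on functionals: `π(α) = (1/m) ∑ σ^i(α)`,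
`σ(α) = α ∘ σ⁻¹`. -/
noncomputable def piF (σ : L ≃ₗ[F] L) (m : ℕ) (α : L →ₗ[F] F) : L →ₗ[F] F :=
  (m : F)⁻¹ • ∑ i ∈ Finset.range m, α ∘ₗ ((σ⁻¹ ^ i : L ≃ₗ[F] L) : L →ₗ[F] L)

/-- The projection `π_j = (1/m) ∑ ζ^{-ji} σ^i` onto the `ζ^j`-eigenspace. -/
noncomputable def piJ (σ : L ≃ₗ[F] L) (m : ℕ) (ζ : F) (j : ℤ) : L →ₗ[F] L :=
  (m : F)⁻¹ • ∑ i ∈ Finset.range m,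
    ζ ^ (-(j * (i : ℤ))) • ((σ ^ i : L ≃ₗ[F] L) : L →ₗ[F] L)

/-- `x̄_j = ∑_{i=0}^{m/ℓ-1} ζ^{-jiℓ} σ^{iℓ}(x)`. -/
noncomputable def xbar (σ : L ≃ₗ[F] L) (m ℓ : ℕ) (ζ : F) (j : ℤ) (x : L) : L :=
  ∑ i ∈ Finset.range (m / ℓ), ζ ^ (-(j * (i : ℤ) * (ℓ : ℤ))) • ((σ ^ (i * ℓ)) x)

/-- Indecomposability of a set of roots with respect to a pairing `p`. -/
def Indecomposable {α : Type*} (p : α → α → F) (R : Set α) : Prop :=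
  ¬ ∃ R₁ R₂ : Set α, R₁.Nonempty ∧ R₂.Nonempty ∧ R₁ ∩ R₂ = ∅ ∧
      R₁ ∪ R₂ = {x ∈ R | p x x ≠ 0} ∧ ∀ x ∈ R₁, ∀ y ∈ R₂, p x y = 0

end IARADefs

/-!
Let `ℓ` be the period of `α|_T` under `σ`, write `m = ℓ q`, and let `e = π'_j(x)` be the
projection of `x` built from `(σ^ℓ, ζ^ℓ, q)`. Then `e ∈ g_α` and
`π_j(x) = ℓ⁻¹ ∑_{r<ℓ} ζ^{-jr} σ^r(e)`, so `e ≠ 0` and (IA2)′ gives `f ∈ g_{-α}` with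
`0 ≠ [e, f] ∈ T`; take `y = f`. Since `π_j(x)` is a `ζ^j`-eigenvector of `σ`,
`[π_j(x), π_{-j}(f)] = π[π_j(x), f]`. By (A4) this bracket centralizes `T`, while for
`0 < r < ℓ` the vector `[σ^r(e), f]` lies in the root space of `σ^r(α) - α`, which is nonzero on
`T` by minimality of `ℓ`. Independence of root spaces leaves
`[π_j(x), π_{-j}(f)] = ℓ⁻¹ π[e, f] ∈ T`, and its pairing with a `σ`-fixed `t₀ ∈ T` with
`α(t₀) ≠ 0` is `ℓ⁻¹ α(t₀) B(e, f) ≠ 0`.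
-/

section PowersOfLinearEquiv

variable {R M : Type*} [CommSemiring R] [AddCommMonoid M] [Module R M] {σ : M ≃ₗ[R] M}

theorem pow_apply_mem {S : Type*} [SetLike S M] {p : S} (hp : ∀ z ∈ p, σ z ∈ p) (n : ℕ)
    {z : M} (hz : z ∈ p) : (σ ^ n) z ∈ p := by
  rw [LinearEquiv.coe_pow]
  exact Set.MapsTo.iterate hp n hz

theorem pow_apply_eq_self {t : M} (ht : σ t = t) (n : ℕ) : (σ ^ n) t = t := by
  rw [LinearEquiv.coe_pow]
  exact Function.iterate_fixed ht n

theorem pow_apply_eq_smul_of_apply_eq_smul {u : M} {c : R} (hu : σ u = c • u) (n : ℕ) :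
    (σ ^ n) u = c ^ n • u := by
  induction n with
  | zero => simp
  | succ n ih => rw [pow_succ', LinearEquiv.mul_apply, ih, map_smul, hu, smul_smul, pow_succ]

theorem pow_sub_apply_pow_apply {m r : ℕ} (hσm : σ ^ m = 1) (hrm : r ≤ m) (s : M) :
    (σ ^ (m - r)) ((σ ^ r) s) = s := by
  rw [← LinearEquiv.mul_apply, ← pow_add, Nat.sub_add_cancel hrm, hσm]
  rfl

theorem pow_apply_pow_sub_apply {m r : ℕ} (hσm : σ ^ m = 1) (hrm : r ≤ m) (s : M) :
    (σ ^ r) ((σ ^ (m - r)) s) = s := by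
  rw [← LinearEquiv.mul_apply, ← pow_add, Nat.add_sub_cancel' hrm, hσm]
  rfl

theorem bilin_pow_apply {B : LinearMap.BilinForm R M} (hσB : ∀ x y : M, B (σ x) (σ y) = B x y)
    (n : ℕ) (x y : M) : B ((σ ^ n) x) ((σ ^ n) y) = B x y := by
  induction n with
  | zero => rfl
  | succ n ih => simp only [pow_succ', LinearEquiv.mul_apply, hσB, ih]

theorem exists_period_of_pow_eq_one {S : Type*} [SetLike S M] {T : S} (hσT : ∀ t ∈ T, σ t ∈ T)
    {m : ℕ} (hm : 0 < m) (hσm : σ ^ m = 1) {Y : Type*} (α : M → Y) :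
    ∃ ℓ, 0 < ℓ ∧ ℓ ∣ m ∧ (∀ t ∈ T, α ((σ ^ ℓ) t) = α t) ∧
      ∀ r, 0 < r → r < ℓ → ∃ t ∈ T, α ((σ ^ r) t) ≠ α t := by
  let Φ : (T → Y) → (T → Y) := fun φ t => φ ⟨σ t, hσT t t.2⟩
  have hΦ : ∀ n (φ : T → Y) (t : T), Φ^[n] φ t = φ ⟨(σ ^ n) t, pow_apply_mem hσT n t.2⟩ := by
    intro n
    induction n with
    | zero => exact fun φ t => rfl
    | succ n ih =>
      intro φ t
      rw [Function.iterate_succ_apply, ih]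
      simp only [Φ, pow_succ', LinearEquiv.mul_apply]
  have hper : ∀ n, Function.IsPeriodicPt Φ n (fun t => α t) ↔ ∀ t ∈ T, α ((σ ^ n) t) = α t := by
    intro n
    simp only [Function.IsPeriodicPt, Function.IsFixedPt, funext_iff, hΦ, Subtype.forall]
  have hαm : Function.IsPeriodicPt Φ m (fun t => α t) := (hper m).2 fun t _ => by rw [hσm]; rfl
  refine ⟨_, hαm.minimalPeriod_pos hm, hαm.minimalPeriod_dvd,
    (hper _).1 (Function.isPeriodicPt_minimalPeriod _ _), fun r hr hrℓ => ?_⟩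
  have h := Function.not_isPeriodicPt_of_pos_of_lt_minimalPeriod hr.ne' hrℓ
  rw [hper] at h
  push Not at h
  exact h

end PowersOfLinearEquiv

section Projections

variable {F L : Type*} [Field F] [LieRing L] [LieAlgebra F L] {σ : L ≃ₗ[F] L}

theorem pow_apply_lie (hσ : ∀ x y : L, σ ⁅x, y⁆ = ⁅σ x, σ y⁆) (n : ℕ) (x y : L) :
    (σ ^ n) ⁅x, y⁆ = ⁅(σ ^ n) x, (σ ^ n) y⁆ := by
  induction n with
  | zero => rfl
  | succ n ih => simp only [pow_succ', LinearEquiv.mul_apply, ih, hσ]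

theorem piJ_apply (σ : L ≃ₗ[F] L) (m : ℕ) (ζ : F) (j : ℤ) (z : L) :
    piJ σ m ζ j z = (m : F)⁻¹ • ∑ i ∈ range m, ζ ^ (-(j * i)) • (σ ^ i) z := by
  simp [piJ]

theorem piL_apply (σ : L ≃ₗ[F] L) (m : ℕ) (z : L) :
    piL σ m z = (m : F)⁻¹ • ∑ i ∈ range m, (σ ^ i) z := by
  simp [piL]

theorem piJ_zero (σ : L ≃ₗ[F] L) (m : ℕ) (ζ : F) : piJ σ m ζ 0 = piL σ m := by
  simp [piJ, piL]

theorem piJ_mem (p : Submodule F L) (hp : ∀ z ∈ p, σ z ∈ p) (m : ℕ) (ζ : F) (j : ℤ) {z : L}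
    (hz : z ∈ p) : piJ σ m ζ j z ∈ p := by
  rw [piJ_apply]
  exact p.smul_mem _ (p.sum_mem fun i _ => p.smul_mem _ (pow_apply_mem hp i hz))

theorem piL_mem (p : Submodule F L) (hp : ∀ z ∈ p, σ z ∈ p) (m : ℕ) {z : L} (hz : z ∈ p) :
    piL σ m z ∈ p := by
  rw [← piJ_zero σ m 1]
  exact piJ_mem p hp m 1 0 hz

theorem apply_piJ {m : ℕ} {ζ : F} (hσm : σ ^ m = 1) (hζm : ζ ^ m = 1) (j : ℤ) (z : L) :
    σ (piJ σ m ζ j z) = ζ ^ j • piJ σ m ζ j z := by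
  rcases Nat.eq_zero_or_pos m with rfl | hm
  · simp [piJ]
  have hζ0 : ζ ≠ 0 := by rintro rfl; simp [hm.ne'] at hζm
  set g : ℕ → L := fun i => ζ ^ (-(j * i)) • (σ ^ i) z
  have hg : g m = g 0 := by
    simp [g, hσm, mul_comm j, zpow_mul, hζm]
  have hshift : ∑ i ∈ range m, g (i + 1) = ∑ i ∈ range m, g i := by
    have h := sum_range_succ' g m
    rw [sum_range_succ, hg] at h
    exact (add_right_cancel h).symm
  rw [piJ_apply, map_smul, map_sum, smul_comm (ζ ^ j), ← hshift]
  congr 1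
  rw [smul_sum]
  refine sum_congr rfl fun i _ => ?_
  simp only [g, map_smul, smul_smul, ← zpow_add₀ hζ0, pow_succ', LinearEquiv.mul_apply]
  congr 2
  push_cast
  ring

theorem lie_piJ_neg_of_apply_eq_smul (hσ : ∀ x y : L, σ ⁅x, y⁆ = ⁅σ x, σ y⁆) {m : ℕ} {ζ : F}
    {j : ℤ} {u : L} (hu : σ u = ζ ^ j • u) (v : L) :
    ⁅u, piJ σ m ζ (-j) v⁆ = piL σ m ⁅u, v⁆ := by
  rw [piJ_apply, piL_apply, lie_smul, lie_sum]
  congr 1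
  refine sum_congr rfl fun i _ => ?_
  rw [pow_apply_lie hσ, pow_apply_eq_smul_of_apply_eq_smul hu, smul_lie, lie_smul,
    ← zpow_natCast (ζ ^ j), ← zpow_mul, neg_mul, neg_neg]

theorem lie_piJ_of_apply_eq_self (hσ : ∀ x y : L, σ ⁅x, y⁆ = ⁅σ x, σ y⁆) {t : L} (ht : σ t = t)
    (m : ℕ) (ζ : F) (j : ℤ) (z : L) : ⁅t, piJ σ m ζ j z⁆ = piJ σ m ζ j ⁅t, z⁆ := by
  simp only [piJ_apply, lie_smul, lie_sum, pow_apply_lie hσ, pow_apply_eq_self ht]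

theorem sum_range_mul_eq_sum_sum {M : Type*} [AddCommMonoid M] (g : ℕ → M) (ℓ q : ℕ) :
    ∑ i ∈ range (ℓ * q), g i = ∑ r ∈ range ℓ, ∑ k ∈ range q, g (r + ℓ * k) := by
  rw [sum_comm, mul_comm]
  simp only [sum_range]
  rw [← finProdFinEquiv.sum_comp, Fintype.sum_prod_type]
  rfl

theorem piJ_mul_apply (σ : L ≃ₗ[F] L) {ζ : F} (hζ : ζ ≠ 0) (ℓ q : ℕ) (j : ℤ) (z : L) :
    piJ σ (ℓ * q) ζ j z =
      (ℓ : F)⁻¹ • ∑ r ∈ range ℓ, ζ ^ (-(j * r)) • (σ ^ r) (piJ (σ ^ ℓ) q (ζ ^ ℓ) j z) := by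
  simp only [piJ_apply, map_smul, map_sum, smul_sum, smul_smul, ← LinearEquiv.mul_apply,
    ← pow_mul, ← pow_add, sum_range_mul_eq_sum_sum _ ℓ q]
  refine sum_congr rfl fun r _ => sum_congr rfl fun k _ => ?_
  congr 1
  rw [← zpow_natCast ζ ℓ, ← zpow_mul, Nat.cast_mul, mul_inv]
  field_simp
  rw [← zpow_add₀ hζ]
  push_cast
  ring_nf

theorem bilin_piL_apply {B : LinearMap.BilinForm F L} (hσB : ∀ x y : L, B (σ x) (σ y) = B x y)
    {t : L} (ht : σ t = t) {m : ℕ} (hm : (m : F) ≠ 0) (u : L) : B (piL σ m u) t = B u t := by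
  have h : ∀ i : ℕ, B ((σ ^ i) u) t = B u t := fun i => by
    rw [← bilin_pow_apply hσB i u t, pow_apply_eq_self ht]
  simp [piL_apply, h, hm]

end Projections

section RootSpaces

variable {F L : Type*} [Field F] [LieRing L] [LieAlgebra F L] {T : LieSubalgebra F L}

theorem mem_gSpace_zero_iff {z : L} : z ∈ gSpace F L T 0 ↔ ∀ t ∈ T, ⁅t, z⁆ = 0 :=
  forall₂_congr fun t _ => by rw [LinearMap.zero_apply, zero_smul]

theorem lie_mem_gSpace {β γ : L →ₗ[F] F} {a b : L} (ha : a ∈ gSpace F L T β)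
    (hb : b ∈ gSpace F L T γ) : ⁅a, b⁆ ∈ gSpace F L T (β + γ) := fun t ht => by
  rw [leibniz_lie, ha t ht, hb t ht, smul_lie, lie_smul, LinearMap.add_apply, add_smul]

theorem pow_apply_mem_gSpace {σ : L ≃ₗ[F] L} (hσ : ∀ x y : L, σ ⁅x, y⁆ = ⁅σ x, σ y⁆)
    (hσT : ∀ t ∈ T, σ t ∈ T) {m n : ℕ} (hσm : σ ^ m = 1) (hnm : n ≤ m) {β γ : L →ₗ[F] F}
    (hγ : ∀ t ∈ T, γ ((σ ^ n) t) = β t) {z : L} (hz : z ∈ gSpace F L T β) :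
    (σ ^ n) z ∈ gSpace F L T γ := by
  intro t ht
  have hs : (σ ^ (m - n)) t ∈ T := pow_apply_mem hσT _ ht
  rw [← pow_apply_pow_sub_apply hσm hnm t, ← pow_apply_lie hσ, hz _ hs, map_smul, hγ _ hs]

theorem IsInvForm.apply_lie_ne_zero {B : LinearMap.BilinForm F L} (hB : IsInvForm F L B T)
    {α : L →ₗ[F] F} {e f : L} (hf : f ∈ gSpace F L T (-α))
    (hefT : ⁅e, f⁆ ∈ T) (hef : ⁅e, f⁆ ≠ 0) {t : L} (ht : t ∈ T) (hαt : α t ≠ 0) :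
    B ⁅e, f⁆ t ≠ 0 := by
  have hB_lie : ∀ s ∈ T, B ⁅e, f⁆ s = α s * B e f := fun s hs => by
    rw [hB.inv, ← lie_skew, hf s hs, LinearMap.neg_apply, neg_smul, neg_neg, map_smul,
      smul_eq_mul]
  have hBef : B e f ≠ 0 := fun h =>
    hef (hB.nondegT _ hefT fun s hs => by rw [hB_lie s hs, h, mul_zero])
  rw [hB_lie t ht]
  exact mul_ne_zero hαt hBef

variable (T) in
def nonzeroRootSpaces : Submodule F L :=
  ⨆ γ : {γ : L →ₗ[F] F // ∃ t ∈ T, γ t ≠ 0}, gSpace F L T γ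

theorem gSpace_le_nonzeroRootSpaces {γ : L →ₗ[F] F} {t : L} (ht : t ∈ T) (hγ : γ t ≠ 0) :
    gSpace F L T γ ≤ nonzeroRootSpaces T :=
  le_iSup (fun γ : {γ : L →ₗ[F] F // ∃ t ∈ T, γ t ≠ 0} => gSpace F L T γ) ⟨γ, t, ht, hγ⟩

theorem sum_eq_zero_of_mem_gSpace_zero {ι : Type*} (s : Finset ι) (γ : ι → L →ₗ[F] F)
    (hγ : ∀ i ∈ s, ∃ t ∈ T, γ i t ≠ 0) (w : ι → L) (hw : ∀ i ∈ s, w i ∈ gSpace F L T (γ i))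
    (h0 : ∑ i ∈ s, w i ∈ gSpace F L T 0) : ∑ i ∈ s, w i = 0 := by
  classical
  induction s using Finset.induction_on generalizing w with
  | empty => simp
  | insert a s ha ih =>
    obtain ⟨t, ht, hγt⟩ := hγ a (mem_insert_self a s)
    -- `c • w i - ⁅t, w i⁆` vanishes for `i = a` and stays in the root space of `γ i` otherwise
    set c := γ a t
    have hw' : ∀ i ∈ s, c • w i - ⁅t, w i⁆ ∈ gSpace F L T (γ i) := fun i hi =>
      have hwi := hw i (mem_insert_of_mem hi)
      sub_mem (Submodule.smul_mem _ c hwi) (by rw [hwi t ht]; exact Submodule.smul_mem _ _ hwi)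
    have hsum : ∑ i ∈ s, (c • w i - ⁅t, w i⁆) = c • ∑ i ∈ insert a s, w i := by
      have ha0 : c • w a - ⁅t, w a⁆ = 0 := by rw [hw a (mem_insert_self a s) t ht, sub_self]
      rw [← sub_zero (c • ∑ i ∈ insert a s, w i), ← (mem_gSpace_zero_iff.mp h0) t ht, lie_sum,
        smul_sum, ← sum_sub_distrib, sum_insert ha, ha0, zero_add]
    have h := ih (fun i hi => hγ i (mem_insert_of_mem hi)) _ hw'
      (by rw [hsum]; exact Submodule.smul_mem _ c h0)
    rw [hsum] at h
    exact (smul_eq_zero.mp h).resolve_left hγt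

theorem disjoint_gSpace_zero_nonzeroRootSpaces :
    Disjoint (gSpace F L T 0) (nonzeroRootSpaces T) := by
  rw [Submodule.disjoint_def]
  intro u h0 hu
  obtain ⟨s, hs⟩ := Submodule.mem_iSup_iff_exists_finset.mp hu
  obtain ⟨μ, rfl⟩ := (Submodule.mem_iSup_finset_iff_exists_sum _ u).mp hs
  exact sum_eq_zero_of_mem_gSpace_zero s (fun γ => γ.1) (fun γ _ => γ.2) _
    (fun γ _ => (μ γ).2) h0

theorem apply_mem_nonzeroRootSpaces {σ : L ≃ₗ[F] L} (hσ : ∀ x y : L, σ ⁅x, y⁆ = ⁅σ x, σ y⁆)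
    (hσT : ∀ t ∈ T, σ t ∈ T) {m : ℕ} (hm : 0 < m) (hσm : σ ^ m = 1) {z : L}
    (hz : z ∈ nonzeroRootSpaces T) : σ z ∈ nonzeroRootSpaces T := by
  refine Submodule.iSup_induction (motive := fun z => σ z ∈ nonzeroRootSpaces T) _ hz
    ?_ (by simp) fun x y hx hy => by rw [map_add]; exact add_mem hx hy
  rintro ⟨γ, t, ht, hγt⟩ z hz
  have hσγ : ∀ s ∈ T, (γ ∘ₗ ((σ ^ (m - 1) : L ≃ₗ[F] L) : L →ₗ[F] L)) ((σ ^ 1) s) = γ s :=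
    fun s _ => congrArg γ (pow_sub_apply_pow_apply hσm hm s)
  have h := pow_apply_mem_gSpace hσ hσT hσm hm hσγ hz
  rw [pow_one] at h
  refine gSpace_le_nonzeroRootSpaces (hσT t ht) ?_ h
  simpa only [pow_one] using (hσγ t ht).trans_ne hγt

theorem lie_pow_apply_mem_nonzeroRootSpaces {σ : L ≃ₗ[F] L}
    (hσ : ∀ x y : L, σ ⁅x, y⁆ = ⁅σ x, σ y⁆) (hσT : ∀ t ∈ T, σ t ∈ T) {m r : ℕ}
    (hσm : σ ^ m = 1) (hrm : r ≤ m) {α : L →ₗ[F] F} (hα : ∃ t ∈ T, α ((σ ^ r) t) ≠ α t)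
    {e f : L} (he : e ∈ gSpace F L T α) (hf : f ∈ gSpace F L T (-α)) :
    ⁅(σ ^ r) e, f⁆ ∈ nonzeroRootSpaces T := by
  have hshift : ∀ s ∈ T,
      (α ∘ₗ ((σ ^ (m - r) : L ≃ₗ[F] L) : L →ₗ[F] L)) ((σ ^ r) s) = α s :=
    fun s _ => congrArg α (pow_sub_apply_pow_apply hσm hrm s)
  obtain ⟨t, ht, hαt⟩ := hα
  refine gSpace_le_nonzeroRootSpaces (pow_apply_mem hσT r ht) ?_
    (lie_mem_gSpace (pow_apply_mem_gSpace hσ hσT hσm hrm hshift he) hf)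
  rw [LinearMap.add_apply, hshift t ht, LinearMap.neg_apply, ← sub_eq_add_neg, sub_ne_zero]
  exact hαt.symm

end RootSpaces

section Bracket

variable {F L : Type*} [Field F] [LieRing L] [LieAlgebra F L] {T : LieSubalgebra F L}
  {σ : L ≃ₗ[F] L} {m : ℕ} {ζ : F}

theorem apply_lie_piJ_piJ_neg (hσ : ∀ x y : L, σ ⁅x, y⁆ = ⁅σ x, σ y⁆) (hσm : σ ^ m = 1)
    (hζm : ζ ^ m = 1) (hζ : ζ ≠ 0) (j : ℤ) (x y : L) :
    σ ⁅piJ σ m ζ j x, piJ σ m ζ (-j) y⁆ = ⁅piJ σ m ζ j x, piJ σ m ζ (-j) y⁆ := by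
  rw [hσ, apply_piJ hσm hζm, apply_piJ hσm hζm, smul_lie, lie_smul, smul_smul,
    ← zpow_add₀ hζ, add_neg_cancel, zpow_zero, one_smul]

theorem lie_piJ_piJ_neg_mem_gSpace_zero (hσ : ∀ x y : L, σ ⁅x, y⁆ = ⁅σ x, σ y⁆)
    (hσm : σ ^ m = 1) (hζm : ζ ^ m = 1) (hζ : ζ ≠ 0) (hA4 : A4Cond T σ) {α : L →ₗ[F] F}
    {x y : L} (hx : x ∈ gSpace F L T α) (hy : y ∈ gSpace F L T (-α)) (j : ℤ) :
    ⁅piJ σ m ζ j x, piJ σ m ζ (-j) y⁆ ∈ gSpace F L T 0 := by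
  rw [mem_gSpace_zero_iff]
  refine hA4 _ (apply_lie_piJ_piJ_neg hσ hσm hζm hζ j x y) fun t ht hσt => ?_
  rw [leibniz_lie, lie_piJ_of_apply_eq_self hσ hσt, lie_piJ_of_apply_eq_self hσ hσt, hx t ht,
    hy t ht, map_smul, map_smul, smul_lie, lie_smul, LinearMap.neg_apply, neg_smul,
    add_neg_cancel]

theorem lie_piJ_piJ_neg_eq_smul_piL (hσ : ∀ x y : L, σ ⁅x, y⁆ = ⁅σ x, σ y⁆)
    (hσT : ∀ t ∈ T, σ t ∈ T) (hσm : σ ^ m = 1) (hζm : ζ ^ m = 1) (hζ : ζ ≠ 0)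
    (hA4 : A4Cond T σ) {α : L →ₗ[F] F} {ℓ : ℕ} (hℓ : 0 < ℓ) (hℓm : ℓ ≤ m)
    (hαr : ∀ r, 0 < r → r < ℓ → ∃ t ∈ T, α ((σ ^ r) t) ≠ α t) {x e f : L}
    (hx : x ∈ gSpace F L T α) (he : e ∈ gSpace F L T α) (hf : f ∈ gSpace F L T (-α)) {j : ℤ}
    (hxe : piJ σ m ζ j x = (ℓ : F)⁻¹ • ∑ r ∈ range ℓ, ζ ^ (-(j * r)) • (σ ^ r) e) :
    ⁅piJ σ m ζ j x, piJ σ m ζ (-j) f⁆ = (ℓ : F)⁻¹ • piL σ m ⁅e, f⁆ := by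
  have hm : 0 < m := hℓ.trans_le hℓm
  set n := (ℓ : F)⁻¹ • ∑ r ∈ (range ℓ).erase 0, ζ ^ (-(j * r)) • ⁅(σ ^ r) e, f⁆
  have hn : n ∈ nonzeroRootSpaces T := by
    refine Submodule.smul_mem _ _ (Submodule.sum_mem _ fun r hr => Submodule.smul_mem _ _ ?_)
    obtain ⟨hr0, hrℓ⟩ := mem_erase.mp hr
    rw [mem_range] at hrℓ
    exact lie_pow_apply_mem_nonzeroRootSpaces hσ hσT hσm (hrℓ.le.trans hℓm)
      (hαr r (Nat.pos_of_ne_zero hr0) hrℓ) he hf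
  have hsplit : ⁅piJ σ m ζ j x, f⁆ = (ℓ : F)⁻¹ • ⁅e, f⁆ + n := by
    rw [hxe, smul_lie, sum_lie, ← add_sum_erase _ _ (mem_range.mpr hℓ)]
    simp [n, smul_lie, smul_add]
  have hc : ⁅piJ σ m ζ j x, piJ σ m ζ (-j) f⁆ = (ℓ : F)⁻¹ • piL σ m ⁅e, f⁆ + piL σ m n := by
    rw [lie_piJ_neg_of_apply_eq_smul hσ (apply_piJ hσm hζm j x), hsplit, map_add, map_smul]
  have hd : (ℓ : F)⁻¹ • piL σ m ⁅e, f⁆ ∈ gSpace F L T 0 := by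
    have hef : ⁅e, f⁆ ∈ gSpace F L T 0 := by simpa using lie_mem_gSpace he hf
    refine Submodule.smul_mem _ _ (piL_mem _ (fun z hz => ?_) m hef)
    simpa using pow_apply_mem_gSpace hσ hσT hσm hm (β := 0) (γ := 0) (fun _ _ => rfl) hz
  have hn0 : piL σ m n = 0 := by
    refine Submodule.disjoint_def.mp disjoint_gSpace_zero_nonzeroRootSpaces _ ?_
      (piL_mem _ (fun z hz => apply_mem_nonzeroRootSpaces hσ hσT hm hσm hz) m hn)
    have h := sub_mem (lie_piJ_piJ_neg_mem_gSpace_zero hσ hσm hζm hζ hA4 hx hf j) hd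
    rwa [hc, add_sub_cancel_left] at h
  rw [hc, hn0, add_zero]

end Bracket

/-- in a division IARA, if `π(α) ≠ 0`, `x ∈ g_α` and
`π_j(x) ≠ 0`, then there is `y ∈ g_{-α}` with
`0 ≠ [π_j(x), π_{-j}(y)] ∈ T⁰`. -/
theorem stmt13 {F L : Type*} [Field F] [CharZero F] [LieRing L] [LieAlgebra F L]
    (T : LieSubalgebra F L) (R : Set (L →ₗ[F] F))
    (B : LinearMap.BilinForm F L)
    (hIARA : IsDivIARA F L B T R)
    (m : ℕ) (hm : 0 < m) (ζ : F) (hζ : IsPrimitiveRoot ζ m)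
    (σ : L ≃ₗ[F] L) (hσLie : ∀ x y : L, σ ⁅x, y⁆ = ⁅σ x, σ y⁆)
    (hσm : σ ^ m = 1) (hσT : ∀ t ∈ T, σ t ∈ T)
    (hσB : ∀ x y : L, B (σ x) (σ y) = B x y)
    (hA4 : A4Cond T σ)
    (α : L →ₗ[F] F) (hα : α ∈ R)
    (hπα : ∃ t ∈ T, σ t = t ∧ α t ≠ 0)
    (x : L) (hx : x ∈ gSpace F L T α) (j : ℤ)
    (hπj : piJ σ m ζ j x ≠ 0) :
    ∃ y ∈ gSpace F L T (-α),
      ⁅piJ σ m ζ j x, piJ σ m ζ (-j) y⁆ ≠ 0 ∧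
      ⁅piJ σ m ζ j x, piJ σ m ζ (-j) y⁆ ∈ T ∧
      σ ⁅piJ σ m ζ j x, piJ σ m ζ (-j) y⁆ = ⁅piJ σ m ζ j x, piJ σ m ζ (-j) y⁆ := by
  obtain ⟨t₀, ht₀T, ht₀σ, ht₀α⟩ := hπα
  have hζ0 : ζ ≠ 0 := hζ.ne_zero hm.ne'
  obtain ⟨ℓ, hℓ, ⟨q, rfl⟩, hαℓ, hαr⟩ := exists_period_of_pow_eq_one hσT hm hσm α
  have hℓm : ℓ ≤ ℓ * q := Nat.le_of_dvd hm (dvd_mul_right ℓ q)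
  have hxe := piJ_mul_apply σ hζ0 ℓ q j x
  set e := piJ (σ ^ ℓ) q (ζ ^ ℓ) j x
  have he : e ∈ gSpace F L T α :=
    piJ_mem _ (fun z hz => pow_apply_mem_gSpace hσLie hσT hσm hℓm hαℓ hz) q _ j hx
  have he0 : e ≠ 0 := fun h => hπj (by rw [hxe, h]; simp)
  obtain ⟨f, hf, hef, hefT⟩ := hIARA.ia2' α hα ⟨t₀, ht₀T, ht₀α⟩ e he he0
  have hc := lie_piJ_piJ_neg_eq_smul_piL hσLie hσT hσm hζ.pow_eq_one hζ0 hA4 hℓ hℓm hαr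
    hx he hf hxe
  refine ⟨f, hf, ?_, ?_, apply_lie_piJ_piJ_neg hσLie hσm hζ.pow_eq_one hζ0 j x f⟩
  · rw [hc]
    refine smul_ne_zero (inv_ne_zero (Nat.cast_ne_zero.mpr hℓ.ne')) fun h => ?_
    apply hIARA.ia1.apply_lie_ne_zero hf hefT hef ht₀T ht₀α
    rw [← bilin_piL_apply hσB ht₀σ (Nat.cast_ne_zero.mpr hm.ne'), h, map_zero,
      LinearMap.zero_apply]
  · rw [hc]
    exact T.smul_mem _ (piL_mem T.toSubmodule hσT _ hefT)
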